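/- Let U ⊆ ℝⁿ be open, let g₀ : U → Mₙ(ℝ) be a C¹ map taking symmetric positive-definite values, let c, c̃ : U → ℝ be C¹ and strictly positive, set g = c²g₀, g̃ = c̃²g₀, h = log(c̃/c), and let Γ, Γ̃ be the Christoffel symbols of g and g̃. Let Y, Ỹ : U → Mₙ(ℝ) be continuous with g(z)Y(z) and g̃(z)Ỹ(z) antisymmetric for every z ∈ U. Define V, Ṽ : U × ℝⁿ → ℝⁿ × ℝⁿ by V(z,v) = (v, w) with wⁱ = −Σ_{j,k} Γⁱⱼₖ(z)vʲvᵏ + Σⱼ Yⁱⱼ(z)vʲ, and analogously Ṽ using Γ̃ and Ỹ. Let X̃ = (Z̃, Ξ̃) : ℝ × (U × ℝⁿ) → U × ℝⁿ be a C¹ flow of Ṽ. Let T > 0 and let (x, v) : [0,T] → U × ℝⁿ be continuously differentiable with (x, v)′(s) = V(x(s), v(s)), with initial unit speed v(0)ᵀ g(x(0)) v(0) = 1, and suppose the endpoints agree: (x(T), v(T)) = X̃(T, (x(0), v(0))). Then for every l ∈ {1,…,n}: ∫₀ᵀ Σᵢ (∂Ξ̃ˡ/∂vⁱ)(T−s,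 (x(s), v(s))) · [ 2 vⁱ(s) (Σⱼ ∂ⱼh(x(s)) vʲ(s)) − c(x(s))⁻² Σⱼ (g₀(x(s))⁻¹)ⁱʲ ∂ⱼh(x(s)) + Σⱼ (Yⁱⱼ(x(s)) − Ỹⁱⱼ(x(s))) vʲ(s) ] ds = 0. -/

import Mathlib

/-!
Put `γ = (x, v)` and `F(s) = Ξ̃ˡ(T - s, γ(s))`. Since `X̃(0, ·) = id` and the endpoints agree,
`F(T) = vˡ(T) = F(0)`, so `∫₀ᵀ F' = 0`. Differentiating the group law
`X̃(t + ε, σ) = X̃(t, X̃(ε, σ))` at `ε = 0` gives `D_σX̃(t, σ) Ṽ(σ) = ∂ₜX̃(t, σ)`, hence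
`F'(s) = D_σΞ̃ˡ(T - s, γ(s)) (V - Ṽ)(γ(s))`, and `V - Ṽ = (0, a - ã)` has only a velocity part.
For conformal metrics the Christoffel symbols differ by terms linear in `dh`, and conservation of
the energy `vᵀ g v = 1` (a consequence of the antisymmetry of `g Y`) turns `a - ã` into the
bracket of the integrand.
-/

open Matrix

/-- The Christoffel symbols `Γⁱⱼₖ` of a matrix-valued map `g` on `ℝⁿ`:
`Γⁱⱼₖ(z) = ½ Σₗ (g(z)⁻¹)ⁱˡ (∂ⱼ gₗₖ(z) + ∂ₖ gₗⱼ(z) − ∂ₗ gⱼₖ(z))`. -/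
noncomputable def christoffel {n : ℕ} (g : (Fin n → ℝ) → Matrix (Fin n) (Fin n) ℝ)
    (z : Fin n → ℝ) (i j k : Fin n) : ℝ :=
  (1 / 2) * ∑ l, (g z)⁻¹ i l *
    (fderiv ℝ (fun w => g w l k) z (Pi.single j 1)
      + fderiv ℝ (fun w => g w l j) z (Pi.single k 1)
      - fderiv ℝ (fun w => g w j k) z (Pi.single l 1))

noncomputable def magneticAccel {n : ℕ} (g Y : (Fin n → ℝ) → Matrix (Fin n) (Fin n) ℝ)
    (z u : Fin n → ℝ) : Fin n → ℝ :=
  fun i => -(∑ j, ∑ k, christoffel g z i j k * u j * u k) + ∑ j, Y z i j * u j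

noncomputable def magneticVectorField {n : ℕ} (g Y : (Fin n → ℝ) → Matrix (Fin n) (Fin n) ℝ)
    (σ : (Fin n → ℝ) × (Fin n → ℝ)) : (Fin n → ℝ) × (Fin n → ℝ) :=
  (σ.2, magneticAccel g Y σ.1 σ.2)

theorem ContinuousLinearMap.pi_apply_eq_sum_single_mul {n : ℕ} (L : (Fin n → ℝ) →L[ℝ] ℝ)
    (u : Fin n → ℝ) : L u = ∑ k, L (Pi.single k 1) * u k := by
  conv_lhs => rw [pi_eq_sum_univ' u]
  simp only [map_sum, map_smul, smul_eq_mul, mul_comm]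

section Conformal

variable {n : ℕ} {g0 : (Fin n → ℝ) → Matrix (Fin n) (Fin n) ℝ} {c : (Fin n → ℝ) → ℝ}
  {z : Fin n → ℝ}

theorem fderiv_sq_mul_apply {f : (Fin n → ℝ) → ℝ} (hc : DifferentiableAt ℝ c z) (hcz : c z ≠ 0)
    (hf : DifferentiableAt ℝ f z) (d : Fin n → ℝ) :
    fderiv ℝ (fun w => c w ^ 2 * f w) z d
      = c z ^ 2 * (2 * fderiv ℝ (fun w => Real.log (c w)) z d * f z + fderiv ℝ f z d) := by
  rw [((hc.hasFDerivAt.pow 2).fun_mul hf.hasFDerivAt).fderiv, fderiv.log hc hcz]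
  simp only [_root_.add_apply, _root_.smul_apply, smul_eq_mul]
  field_simp
  ring

theorem christoffel_conformal (hc : DifferentiableAt ℝ c z) (hcz : c z ≠ 0)
    (hg0 : ∀ i j, DifferentiableAt ℝ (fun w => g0 w i j) z) (hdet : IsUnit (g0 z).det)
    (i j k : Fin n) :
    christoffel (fun w => c w ^ 2 • g0 w) z i j k
      = christoffel g0 z i j k
        + (if i = k then fderiv ℝ (fun w => Real.log (c w)) z (Pi.single j 1) else 0)
        + (if i = j then fderiv ℝ (fun w => Real.log (c w)) z (Pi.single k 1) else 0)
        - g0 z j k * ∑ l, (g0 z)⁻¹ i l * fderiv ℝ (fun w => Real.log (c w)) z (Pi.single l 1) := by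
  set ω : Fin n → ℝ := fun d => fderiv ℝ (fun w => Real.log (c w)) z (Pi.single d 1)
  have hδ : ∀ k, ∑ l, (g0 z)⁻¹ i l * g0 z l k = if i = k then 1 else 0 := fun k => by
    rw [← mul_apply, nonsing_inv_mul _ hdet, one_apply]
  have hinv : (c z ^ 2 • g0 z)⁻¹ = (c z ^ 2)⁻¹ • (g0 z)⁻¹ := by
    refine inv_eq_right_inv ?_
    rw [Matrix.smul_mul, Matrix.mul_smul, mul_nonsing_inv _ hdet, smul_smul,
      mul_inv_cancel₀ (pow_ne_zero 2 hcz), one_smul]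
  have hsplit : christoffel (fun w => c w ^ 2 • g0 w) z i j k = christoffel g0 z i j k
      + ∑ l, (g0 z)⁻¹ i l * (ω j * g0 z l k + ω k * g0 z l j - ω l * g0 z j k) := by
    simp only [christoffel, Matrix.smul_apply, smul_eq_mul, hinv,
      fun a b d => fderiv_sq_mul_apply hc hcz (hg0 a b) (Pi.single d 1)]
    rw [Finset.mul_sum, Finset.mul_sum, ← Finset.sum_add_distrib]
    refine Finset.sum_congr rfl fun l _ => ?_
    field_simp
    ring
  have hsum : ∑ l, (g0 z)⁻¹ i l * (ω j * g0 z l k + ω k * g0 z l j - ω l * g0 z j k)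
      = ω j * ∑ l, (g0 z)⁻¹ i l * g0 z l k + ω k * ∑ l, (g0 z)⁻¹ i l * g0 z l j
        - g0 z j k * ∑ l, (g0 z)⁻¹ i l * ω l := by
    simp only [Finset.mul_sum, ← Finset.sum_add_distrib, ← Finset.sum_sub_distrib]
    exact Finset.sum_congr rfl fun l _ => by ring
  rw [hsplit, hsum, hδ, hδ]
  simp only [mul_ite, mul_one, mul_zero]
  ring

theorem sum_christoffel_conformal_mul (hc : DifferentiableAt ℝ c z) (hcz : c z ≠ 0)
    (hg0 : ∀ i j, DifferentiableAt ℝ (fun w => g0 w i j) z) (hdet : IsUnit (g0 z).det)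
    (i : Fin n) (u : Fin n → ℝ) :
    ∑ j, ∑ k, christoffel (fun w => c w ^ 2 • g0 w) z i j k * u j * u k
      = ∑ j, ∑ k, christoffel g0 z i j k * u j * u k
        + 2 * u i * ∑ j, fderiv ℝ (fun w => Real.log (c w)) z (Pi.single j 1) * u j
        - (u ⬝ᵥ g0 z *ᵥ u)
          * ∑ j, (g0 z)⁻¹ i j * fderiv ℝ (fun w => Real.log (c w)) z (Pi.single j 1) := by
  set ω : Fin n → ℝ := fun d => fderiv ℝ (fun w => Real.log (c w)) z (Pi.single d 1)
  set W := ∑ j, (g0 z)⁻¹ i j * ω j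
  have hB : ∑ j, ∑ k, (if i = k then ω j else 0) * u j * u k = u i * ∑ j, ω j * u j := by
    simp only [ite_mul, zero_mul, Finset.sum_ite_eq, Finset.mem_univ, if_true, Finset.mul_sum]
    exact Finset.sum_congr rfl fun j _ => by ring
  have hC : ∑ j, ∑ k, (if i = j then ω k else 0) * u j * u k = u i * ∑ j, ω j * u j := by
    simp only [ite_mul, zero_mul, Finset.sum_ite_irrel, Finset.sum_const_zero, Finset.sum_ite_eq,
      Finset.mem_univ, if_true, Finset.mul_sum]
    exact Finset.sum_congr rfl fun j _ => by ring
  have hD : ∑ j, ∑ k, g0 z j k * W * u j * u k = (u ⬝ᵥ g0 z *ᵥ u) * W := by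
    simp only [dotProduct, mulVec, Finset.sum_mul, Finset.mul_sum]
    exact Finset.sum_congr rfl fun j _ => Finset.sum_congr rfl fun k _ => by ring
  simp only [christoffel_conformal hc hcz hg0 hdet, add_mul, sub_mul, Finset.sum_add_distrib,
    Finset.sum_sub_distrib]
  rw [hB, hC, hD]
  ring

theorem fderiv_log_div {c' : (Fin n → ℝ) → ℝ} (hc : DifferentiableAt ℝ c z) (hcz : c z ≠ 0)
    (hc' : DifferentiableAt ℝ c' z) (hc'z : c' z ≠ 0) :
    fderiv ℝ (fun w => Real.log (c' w / c w)) z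
      = fderiv ℝ (fun w => Real.log (c' w)) z - fderiv ℝ (fun w => Real.log (c w)) z := by
  have hev : (fun w => Real.log (c' w / c w)) =ᶠ[nhds z]
      fun w => Real.log (c' w) - Real.log (c w) := by
    filter_upwards [hc.continuousAt.eventually_ne hcz, hc'.continuousAt.eventually_ne hc'z]
      with w hw hw' using Real.log_div hw' hw
  rw [hev.fderiv_eq, fderiv_fun_sub (hc'.log hc'z) (hc.log hcz)]

theorem magneticAccel_conformal_sub {c' : (Fin n → ℝ) → ℝ}
    {Y Y' : (Fin n → ℝ) → Matrix (Fin n) (Fin n) ℝ}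
    (hc : DifferentiableAt ℝ c z) (hcz : c z ≠ 0)
    (hc' : DifferentiableAt ℝ c' z) (hc'z : c' z ≠ 0)
    (hg0 : ∀ i j, DifferentiableAt ℝ (fun w => g0 w i j) z) (hdet : IsUnit (g0 z).det)
    {u : Fin n → ℝ} (hu : u ⬝ᵥ g0 z *ᵥ u = (c z ^ 2)⁻¹) (i : Fin n) :
    magneticAccel (fun w => c w ^ 2 • g0 w) Y z u i
        - magneticAccel (fun w => c' w ^ 2 • g0 w) Y' z u i
      = 2 * u i * (∑ j, fderiv ℝ (fun w => Real.log (c' w / c w)) z (Pi.single j 1) * u j)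
        - (c z ^ 2)⁻¹ * ∑ j, (g0 z)⁻¹ i j
            * fderiv ℝ (fun w => Real.log (c' w / c w)) z (Pi.single j 1)
        + ∑ j, (Y z i j - Y' z i j) * u j := by
  simp only [magneticAccel, sum_christoffel_conformal_mul hc hcz hg0 hdet,
    sum_christoffel_conformal_mul hc' hc'z hg0 hdet, hu, fderiv_log_div hc hcz hc' hc'z,
    _root_.sub_apply, sub_mul, mul_sub, Finset.sum_sub_distrib]
  ring

end Conformal

section Energy

variable {n : ℕ}

theorem dotProduct_mulVec_self_eq_zero {M : Matrix (Fin n) (Fin n) ℝ} (hM : Mᵀ = -M)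
    (u : Fin n → ℝ) : u ⬝ᵥ M *ᵥ u = 0 := by
  have h := congrArg (fun A => u ⬝ᵥ A *ᵥ u) hM
  simp only [mulVec_transpose, neg_mulVec, dotProduct_neg, dotProduct_comm u (u ᵥ* M),
    ← dotProduct_mulVec] at h
  linarith

theorem sum_mul_sum_sum_christoffel_first_kind (d : Fin n → Fin n → Fin n → ℝ)
    (u : Fin n → ℝ) :
    ∑ m, u m * ∑ j, ∑ k, (d m k j + d m j k - d j k m) * u j * u k
      = ∑ i, ∑ j, ∑ k, d i j k * u i * u j * u k := by
  set T := ∑ i, ∑ j, ∑ k, d i j k * u i * u j * u k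
  have hA : ∑ m, u m * ∑ j, ∑ k, d m k j * u j * u k = T := by
    refine Finset.sum_congr rfl fun m _ => ?_
    rw [Finset.sum_comm, Finset.mul_sum]
    exact Finset.sum_congr rfl fun j _ => by
      rw [Finset.mul_sum]; exact Finset.sum_congr rfl fun k _ => by ring
  have hB : ∑ m, u m * ∑ j, ∑ k, d m j k * u j * u k = T := by
    refine Finset.sum_congr rfl fun m _ => ?_
    rw [Finset.mul_sum]
    exact Finset.sum_congr rfl fun j _ => by
      rw [Finset.mul_sum]; exact Finset.sum_congr rfl fun k _ => by ring
  have hC : ∑ m, u m * ∑ j, ∑ k, d j k m * u j * u k = T := by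
    simp only [Finset.mul_sum]
    rw [Finset.sum_comm]
    refine Finset.sum_congr rfl fun j _ => ?_
    rw [Finset.sum_comm]
    exact Finset.sum_congr rfl fun k _ => Finset.sum_congr rfl fun m _ => by ring
  simp only [add_mul, sub_mul, Finset.sum_add_distrib, Finset.sum_sub_distrib, mul_add, mul_sub]
  rw [hA, hB, hC]
  ring

variable {G Y : (Fin n → ℝ) → Matrix (Fin n) (Fin n) ℝ} {z : Fin n → ℝ}

theorem sum_mul_christoffel (hdet : IsUnit (G z).det) (m j k : Fin n) :
    ∑ i, G z m i * christoffel G z i j k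
      = 1 / 2 * (fderiv ℝ (fun w => G w m k) z (Pi.single j 1)
        + fderiv ℝ (fun w => G w m j) z (Pi.single k 1)
        - fderiv ℝ (fun w => G w j k) z (Pi.single m 1)) := by
  set b : Fin n → ℝ := fun l => fderiv ℝ (fun w => G w l k) z (Pi.single j 1)
    + fderiv ℝ (fun w => G w l j) z (Pi.single k 1) - fderiv ℝ (fun w => G w j k) z (Pi.single l 1)
  calc ∑ i, G z m i * christoffel G z i j k = 1 / 2 * ∑ l, (G z * (G z)⁻¹) m l * b l := by
        simp only [christoffel, mul_apply, Finset.mul_sum, Finset.sum_mul]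
        rw [Finset.sum_comm]
        exact Finset.sum_congr rfl fun l _ => Finset.sum_congr rfl fun i _ => by ring
    _ = 1 / 2 * b m := by simp [mul_nonsing_inv _ hdet, one_apply]

theorem sum_mul_magneticAccel (hdet : IsUnit (G z).det) (u : Fin n → ℝ) (m : Fin n) :
    ∑ i, G z m i * magneticAccel G Y z u i
      = -(1 / 2 * ∑ j, ∑ k, (fderiv ℝ (fun w => G w m k) z (Pi.single j 1)
          + fderiv ℝ (fun w => G w m j) z (Pi.single k 1)
          - fderiv ℝ (fun w => G w j k) z (Pi.single m 1)) * u j * u k)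
        + ((G z * Y z) *ᵥ u) m := by
  simp only [magneticAccel, mul_add, mul_neg, Finset.sum_add_distrib, Finset.sum_neg_distrib,
    Finset.mul_sum, mulVec, dotProduct, mul_apply, Finset.sum_mul]
  congr 1
  · rw [Finset.sum_comm]
    refine congrArg _ (Finset.sum_congr rfl fun j _ => ?_)
    rw [Finset.sum_comm]
    refine Finset.sum_congr rfl fun k _ => ?_
    have hfac : ∑ i, G z m i * (christoffel G z i j k * u j * u k)
        = (∑ i, G z m i * christoffel G z i j k) * u j * u k := by
      simp only [Finset.sum_mul]
      exact Finset.sum_congr rfl fun i _ => by ring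
    rw [hfac, sum_mul_christoffel hdet]
    ring
  · rw [Finset.sum_comm]
    exact Finset.sum_congr rfl fun j _ => Finset.sum_congr rfl fun i _ => by ring

theorem sum_fderiv_energy_magneticAccel (hsym : (G z).IsSymm) (hdet : IsUnit (G z).det)
    (hY : (G z * Y z)ᵀ = -(G z * Y z)) (u : Fin n → ℝ) :
    ∑ i, ∑ j, (fderiv ℝ (fun w => G w i j) z u * u i * u j
      + G z i j * (magneticAccel G Y z u i * u j + u i * magneticAccel G Y z u j)) = 0 := by
  set a := magneticAccel G Y z u
  have hfirst : ∑ i, ∑ j, fderiv ℝ (fun w => G w i j) z u * u i * u j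
      = ∑ i, ∑ j, ∑ k, fderiv ℝ (fun w => G w i j) z (Pi.single k 1) * u i * u j * u k := by
    simp only [ContinuousLinearMap.pi_apply_eq_sum_single_mul (fderiv ℝ _ z) u, Finset.sum_mul]
    exact Finset.sum_congr rfl fun i _ => Finset.sum_congr rfl fun j _ =>
      Finset.sum_congr rfl fun k _ => by ring
  have hsecond : ∑ i, ∑ j, G z i j * (a i * u j + u i * a j)
      = 2 * ∑ m, u m * ∑ i, G z m i * a i := by
    have h1 : ∑ i, ∑ j, G z i j * (u i * a j) = ∑ m, u m * ∑ i, G z m i * a i := by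
      simp only [Finset.mul_sum]
      exact Finset.sum_congr rfl fun m _ => Finset.sum_congr rfl fun i _ => by ring
    have h2 : ∑ i, ∑ j, G z i j * (a i * u j) = ∑ m, u m * ∑ i, G z m i * a i := by
      rw [Finset.sum_comm]
      simp only [Finset.mul_sum]
      exact Finset.sum_congr rfl fun m _ => Finset.sum_congr rfl fun i _ => by
        rw [hsym.apply m i]; ring
    simp only [mul_add, Finset.sum_add_distrib, h1, h2]
    ring
  have hlower : ∑ m, u m * ∑ i, G z m i * a i
      = -(1 / 2 * ∑ i, ∑ j, ∑ k, fderiv ℝ (fun w => G w i j) z (Pi.single k 1) * u i * u j * u k)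
        + u ⬝ᵥ (G z * Y z) *ᵥ u := by
    simp only [a, sum_mul_magneticAccel hdet, mul_add, mul_neg, Finset.sum_add_distrib,
      Finset.sum_neg_distrib, mul_left_comm (u _) (1 / 2 : ℝ), ← Finset.mul_sum,
      sum_mul_sum_sum_christoffel_first_kind
        (fun i j k => fderiv ℝ (fun w => G w i j) z (Pi.single k 1)) u]
    rfl
  simp only [Finset.sum_add_distrib]
  rw [hfirst, hsecond, hlower, dotProduct_mulVec_self_eq_zero hY]
  ring

theorem magnetic_energy_eq {a b : ℝ} {x v : ℝ → Fin n → ℝ}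
    (hG : ∀ s ∈ Set.Icc a b, ∀ i j, DifferentiableAt ℝ (fun w => G w i j) (x s))
    (hsym : ∀ s ∈ Set.Icc a b, (G (x s)).IsSymm) (hdet : ∀ s ∈ Set.Icc a b, IsUnit (G (x s)).det)
    (hY : ∀ s ∈ Set.Icc a b, (G (x s) * Y (x s))ᵀ = -(G (x s) * Y (x s)))
    (hx : ∀ s ∈ Set.Icc a b, HasDerivWithinAt x (v s) (Set.Icc a b) s)
    (hv : ∀ s ∈ Set.Icc a b,
      HasDerivWithinAt v (magneticAccel G Y (x s) (v s)) (Set.Icc a b) s) :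
    ∀ s ∈ Set.Icc a b, v s ⬝ᵥ G (x s) *ᵥ v s = v a ⬝ᵥ G (x a) *ᵥ v a := by
  have hform : ∀ τ, v τ ⬝ᵥ G (x τ) *ᵥ v τ = ∑ i, ∑ j, G (x τ) i j * v τ i * v τ j := fun τ => by
    simp only [dotProduct, mulVec, Finset.mul_sum]
    exact Finset.sum_congr rfl fun i _ => Finset.sum_congr rfl fun j _ => by ring
  have hderiv : ∀ s ∈ Set.Icc a b,
      HasDerivWithinAt (fun τ => ∑ i, ∑ j, G (x τ) i j * v τ i * v τ j) 0 (Set.Icc a b) s := by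
    intro s hs
    rw [← sum_fderiv_energy_magneticAccel (hsym s hs) (hdet s hs) (hY s hs) (v s)]
    refine HasDerivWithinAt.fun_sum fun i _ => HasDerivWithinAt.fun_sum fun j _ => ?_
    have hGij := ((hG s hs i j).hasFDerivAt.comp_hasDerivWithinAt s (hx s hs))
    refine ((hGij.fun_mul (hasDerivWithinAt_pi.1 (hv s hs) i)).fun_mul
      (hasDerivWithinAt_pi.1 (hv s hs) j)).congr_deriv ?_
    simp only [Function.comp_apply]
    ring
  simp only [hform]
  refine constant_of_has_deriv_right_zero (fun s hs => (hderiv s hs).continuousWithinAt)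
    fun s hs => ?_
  exact (hderiv s (Set.Ico_subset_Icc_self hs)).mono_of_mem_nhdsWithin
    (Icc_mem_nhdsGE_of_mem hs)

end Energy

section Continuity

variable {n : ℕ} {g : (Fin n → ℝ) → Matrix (Fin n) (Fin n) ℝ} {U : Set (Fin n → ℝ)}

theorem continuousOn_inv_apply (hg : ∀ i j, ContinuousOn (fun z => g z i j) U)
    (hdet : ∀ z ∈ U, IsUnit (g z).det) (i j : Fin n) :
    ContinuousOn (fun z => (g z)⁻¹ i j) U := by
  have hgc : ContinuousOn g U := continuousOn_pi.2 fun i => continuousOn_pi.2 (hg i)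
  have hinv : ContinuousOn (fun z => (g z)⁻¹) U := fun z hz => by
    obtain ⟨d, hd⟩ := hdet z hz
    exact (continuousAt_matrix_inv (g z) (hd ▸ NormedRing.inverse_continuousAt d))
      |>.comp_continuousWithinAt (hgc z hz)
  exact continuousOn_pi.1 (continuousOn_pi.1 hinv i) j

theorem continuousOn_christoffel (hU : IsOpen U) (hg : ∀ i j, ContDiffOn ℝ 1 (fun z => g z i j) U)
    (hdet : ∀ z ∈ U, IsUnit (g z).det) (i j k : Fin n) :
    ContinuousOn (fun z => christoffel g z i j k) U := by
  have hdg : ∀ a b (e : Fin n → ℝ), ContinuousOn (fun z => fderiv ℝ (fun w => g w a b) z e) U :=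
    fun a b e => ((hg a b).continuousOn_fderiv_of_isOpen hU le_rfl).clm_apply continuousOn_const
  have hinv := continuousOn_inv_apply (fun a b => (hg a b).continuousOn) hdet
  exact continuousOn_const.mul (continuousOn_finsetSum _ fun l _ =>
    (hinv i l).mul (((hdg l k _).add (hdg l j _)).sub (hdg j k _)))

theorem continuousOn_magneticAccel_comp {α : Type*} [TopologicalSpace α]
    {Y : (Fin n → ℝ) → Matrix (Fin n) (Fin n) ℝ} {S : Set α} {x v : α → Fin n → ℝ}
    (hU : IsOpen U) (hg : ∀ i j, ContDiffOn ℝ 1 (fun z => g z i j) U)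
    (hdet : ∀ z ∈ U, IsUnit (g z).det) (hY : ∀ i j, ContinuousOn (fun z => Y z i j) U)
    (hx : ContinuousOn x S) (hxU : Set.MapsTo x S U) (hv : ContinuousOn v S) :
    ContinuousOn (fun s => magneticAccel g Y (x s) (v s)) S := by
  have hΓ := fun i j k => (continuousOn_christoffel hU hg hdet i j k).comp hx hxU
  have hY' := fun i j => (hY i j).comp hx hxU
  have hv' := fun i => (continuous_apply i).comp_continuousOn hv
  refine continuousOn_pi.2 fun i => ?_
  exact (continuousOn_finsetSum _ fun j _ => continuousOn_finsetSum _ fun k _ =>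
    ((hΓ i j k).mul (hv' j)).mul (hv' k)).neg.add
    (continuousOn_finsetSum _ fun j _ => (hY' i j).mul (hv' j))

end Continuity

section Flow

variable {E : Type*} [NormedAddCommGroup E] [NormedSpace ℝ E] {X : ℝ → E → E} {V : E → E}

theorem hasFDerivAt_of_differentiable_uncurry (hX : Differentiable ℝ (Function.uncurry X))
    (t : ℝ) (σ : E) :
    HasFDerivAt (X t)
      ((fderiv ℝ (Function.uncurry X) (t, σ)).comp (ContinuousLinearMap.inr ℝ ℝ E)) σ :=
  (hX (t, σ)).hasFDerivAt.comp σ (hasFDerivAt_prodMk_right t σ)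

theorem fderiv_uncurry_apply_one_zero (hX : Differentiable ℝ (Function.uncurry X))
    (hXode : ∀ t σ, HasDerivAt (fun τ => X τ σ) (V (X t σ)) t) (t : ℝ) (σ : E) :
    fderiv ℝ (Function.uncurry X) (t, σ) (1, 0) = V (X t σ) := by
  have h := (hX (t, σ)).hasFDerivAt.comp_hasDerivAt t
    ((hasDerivAt_id t).prodMk (hasDerivAt_const t σ))
  exact h.unique (hXode t σ)

theorem fderiv_flow_apply (hX : Differentiable ℝ (Function.uncurry X))
    (hX0 : ∀ σ, X 0 σ = σ) (hXode : ∀ t σ, HasDerivAt (fun τ => X τ σ) (V (X t σ)) t)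
    (hXgroup : ∀ s t σ, X (t + s) σ = X t (X s σ)) (t : ℝ) (σ : E) :
    fderiv ℝ (X t) σ (V σ) = V (X t σ) := by
  have hshift : HasDerivAt (fun ε => X (t + ε) σ) (V (X t σ)) 0 :=
    HasDerivAt.comp_const_add t 0 (by simpa using hXode t σ)
  have hchain : HasDerivAt (fun ε => X t (X ε σ)) (fderiv ℝ (X t) σ (V σ)) 0 := by
    have h := (hasFDerivAt_of_differentiable_uncurry hX t (X 0 σ)).comp_hasDerivAt 0 (hXode 0 σ)
    simp only [hX0] at h
    rw [(hasFDerivAt_of_differentiable_uncurry hX t σ).fderiv]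
    exact h
  simp only [hXgroup _ t] at hshift
  exact hchain.unique hshift

theorem hasDerivAt_flow_comp (hX : Differentiable ℝ (Function.uncurry X))
    (hX0 : ∀ σ, X 0 σ = σ) (hXode : ∀ t σ, HasDerivAt (fun τ => X τ σ) (V (X t σ)) t)
    (hXgroup : ∀ s t σ, X (t + s) σ = X t (X s σ)) (T : ℝ) {γ : ℝ → E} {w : E} {s : ℝ}
    (hγ : HasDerivAt γ w s) :
    HasDerivAt (fun τ => X (T - τ) (γ τ)) (fderiv ℝ (X (T - s)) (γ s) (w - V (γ s))) s := by
  set D := fderiv ℝ (Function.uncurry X) (T - s, γ s)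
  have h : HasDerivAt (fun τ => X (T - τ) (γ τ)) (D (-1, w)) s :=
    (hX _).hasFDerivAt.comp_hasDerivAt s (((hasDerivAt_id s).const_sub T).prodMk hγ)
  have hsplit : D (-1, w) = -D (1, 0) + D (0, w) := by
    rw [← map_neg, ← map_add, Prod.neg_mk, neg_zero, Prod.mk_add_mk, zero_add, add_zero]
  rw [hsplit, fderiv_uncurry_apply_one_zero hX hXode, ← fderiv_flow_apply hX hX0 hXode hXgroup,
    (hasFDerivAt_of_differentiable_uncurry hX _ _).fderiv] at h
  convert h using 1
  rw [(hasFDerivAt_of_differentiable_uncurry hX _ _).fderiv, map_sub, neg_add_eq_sub]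
  rfl

theorem integral_fderiv_flow_apply_sub (hX : ContDiff ℝ 1 (Function.uncurry X))
    (hX0 : ∀ σ, X 0 σ = σ) (hXode : ∀ t σ, HasDerivAt (fun τ => X τ σ) (V (X t σ)) t)
    (hXgroup : ∀ s t σ, X (t + s) σ = X t (X s σ)) (L : E →L[ℝ] ℝ) {T : ℝ} (hT : 0 ≤ T)
    {γ w : ℝ → E} (hγ : ∀ s ∈ Set.Icc 0 T, HasDerivWithinAt γ (w s) (Set.Icc 0 T) s)
    (hw : ContinuousOn (fun s => w s - V (γ s)) (Set.Icc 0 T)) :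
    ∫ s in (0 : ℝ)..T, fderiv ℝ (fun σ => L (X (T - s) σ)) (γ s) (w s - V (γ s))
      = L (γ T) - L (X T (γ 0)) := by
  have hXd : Differentiable ℝ (Function.uncurry X) := hX.differentiable one_ne_zero
  have hLX : ∀ s, fderiv ℝ (fun σ => L (X (T - s) σ)) (γ s)
      = L.comp
        ((fderiv ℝ (Function.uncurry X) (T - s, γ s)).comp (ContinuousLinearMap.inr ℝ ℝ E)) :=
    fun s => (L.hasFDerivAt.comp _ (hasFDerivAt_of_differentiable_uncurry hXd _ _)).fderiv
  have hγc : ContinuousOn γ (Set.Icc 0 T) := fun s hs => (hγ s hs).continuousWithinAt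
  have hpath : ContinuousOn (fun s => (T - s, γ s)) (Set.Icc 0 T) :=
    (continuous_const.sub continuous_id).continuousOn.prodMk hγc
  have hint : ContinuousOn (fun s => fderiv ℝ (fun σ => L (X (T - s) σ)) (γ s) (w s - V (γ s)))
      (Set.Icc 0 T) := by
    simp only [hLX]
    exact L.continuous.comp_continuousOn
      (((hX.continuous_fderiv one_ne_zero).comp_continuousOn hpath).clm_comp
        continuousOn_const |>.clm_apply hw)
  have hderiv : ∀ s ∈ Set.Ioo 0 T, HasDerivWithinAt (fun τ => L (X (T - τ) (γ τ)))
      (fderiv ℝ (fun σ => L (X (T - s) σ)) (γ s) (w s - V (γ s))) (Set.Ioi s) s := by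
    intro s hs
    have hγs := (hγ s (Set.Ioo_subset_Icc_self hs)).hasDerivAt (Icc_mem_nhds hs.1 hs.2)
    rw [hLX, ← (hasFDerivAt_of_differentiable_uncurry hXd _ _).fderiv]
    exact (L.hasFDerivAt.comp_hasDerivAt s
      (hasDerivAt_flow_comp hXd hX0 hXode hXgroup T hγs)).hasDerivWithinAt
  simpa [hX0] using intervalIntegral.integral_eq_sub_of_hasDeriv_right_of_le hT
    (L.continuous.comp_continuousOn (hX.continuous.comp_continuousOn hpath)) hderiv
    (hint.intervalIntegrable_of_Icc hT)

end Flow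

theorem integral_fderiv_flow_magneticAccel_sub {n : ℕ}
    {g Y g' Y' : (Fin n → ℝ) → Matrix (Fin n) (Fin n) ℝ} {U : Set (Fin n → ℝ)} (hU : IsOpen U)
    (hg : ∀ i j, ContDiffOn ℝ 1 (fun z => g z i j) U) (hgdet : ∀ z ∈ U, IsUnit (g z).det)
    (hg' : ∀ i j, ContDiffOn ℝ 1 (fun z => g' z i j) U) (hg'det : ∀ z ∈ U, IsUnit (g' z).det)
    (hY : ∀ i j, ContinuousOn (fun z => Y z i j) U)
    (hY' : ∀ i j, ContinuousOn (fun z => Y' z i j) U)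
    {X : ℝ → (Fin n → ℝ) × (Fin n → ℝ) → (Fin n → ℝ) × (Fin n → ℝ)}
    (hX : ContDiff ℝ 1 (Function.uncurry X)) (hX0 : ∀ σ, X 0 σ = σ)
    (hXode : ∀ t σ, HasDerivAt (fun τ => X τ σ) (magneticVectorField g' Y' (X t σ)) t)
    (hXgroup : ∀ s t σ, X (t + s) σ = X t (X s σ)) {T : ℝ} (hT : 0 ≤ T)
    {x v : ℝ → Fin n → ℝ} (hxU : ∀ s ∈ Set.Icc 0 T, x s ∈ U)
    (hx : ∀ s ∈ Set.Icc 0 T, HasDerivWithinAt x (v s) (Set.Icc 0 T) s)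
    (hv : ∀ s ∈ Set.Icc 0 T,
      HasDerivWithinAt v (magneticAccel g Y (x s) (v s)) (Set.Icc 0 T) s)
    (hend : (x T, v T) = X T (x 0, v 0)) (L : (Fin n → ℝ) × (Fin n → ℝ) →L[ℝ] ℝ) :
    ∫ s in (0 : ℝ)..T, fderiv ℝ (fun σ => L (X (T - s) σ)) (x s, v s)
      (0, magneticAccel g Y (x s) (v s) - magneticAccel g' Y' (x s) (v s)) = 0 := by
  have hxc : ContinuousOn x (Set.Icc 0 T) := fun s hs => (hx s hs).continuousWithinAt
  have hvc : ContinuousOn v (Set.Icc 0 T) := fun s hs => (hv s hs).continuousWithinAt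
  have h := integral_fderiv_flow_apply_sub hX hX0 hXode hXgroup L hT
    (γ := fun s => (x s, v s)) (w := fun s => (v s, magneticAccel g Y (x s) (v s)))
    (fun s hs => (hx s hs).prodMk (hv s hs))
    ((hvc.prodMk (continuousOn_magneticAccel_comp hU hg hgdet hY hxc hxU hvc)).sub
      (hvc.prodMk (continuousOn_magneticAccel_comp hU hg' hg'det hY' hxc hxU hvc)))
  rw [← hend, sub_self] at h
  simpa only [magneticVectorField, Prod.mk_sub_mk, sub_self] using h

theorem stmt_13_general (n : ℕ) (U : Set (Fin n → ℝ)) (hU : IsOpen U)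
    (g0 : (Fin n → ℝ) → Matrix (Fin n) (Fin n) ℝ)
    (hg0 : ∀ i j, ContDiffOn ℝ 1 (fun z => g0 z i j) U)
    (hg0sym : ∀ z ∈ U, (g0 z).IsSymm)
    (hg0pos : ∀ z ∈ U, (g0 z).PosDef)
    (c ct : (Fin n → ℝ) → ℝ)
    (hc : ContDiffOn ℝ 1 c U) (hct : ContDiffOn ℝ 1 ct U)
    (hcpos : ∀ z ∈ U, 0 < c z) (hctpos : ∀ z ∈ U, 0 < ct z)
    (Y Yt : (Fin n → ℝ) → Matrix (Fin n) (Fin n) ℝ)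
    (hY : ∀ i j, ContinuousOn (fun z => Y z i j) U)
    (hYt : ∀ i j, ContinuousOn (fun z => Yt z i j) U)
    (hYanti : ∀ z ∈ U, (((c z) ^ 2 • g0 z) * Y z)ᵀ = -(((c z) ^ 2 • g0 z) * Y z))
    -- `X` is a C¹ flow of the magnetic vector field `Ṽ` of `(g̃, Ỹ)`
    (X : ℝ → (Fin n → ℝ) × (Fin n → ℝ) → (Fin n → ℝ) × (Fin n → ℝ))
    (hXC1 : ContDiff ℝ 1 (fun p : ℝ × ((Fin n → ℝ) × (Fin n → ℝ)) => X p.1 p.2))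
    (hX0 : ∀ σ, X 0 σ = σ)
    (hXode : ∀ (t : ℝ) (σ : (Fin n → ℝ) × (Fin n → ℝ)),
      HasDerivAt (fun τ => X τ σ)
        ((X t σ).2, fun i =>
          -(∑ j, ∑ k, christoffel (fun w => (ct w) ^ 2 • g0 w) (X t σ).1 i j k
              * (X t σ).2 j * (X t σ).2 k)
            + ∑ j, Yt (X t σ).1 i j * (X t σ).2 j) t)
    (hXgroup : ∀ s t : ℝ, ∀ σ, X (t + s) σ = X t (X s σ))
    -- `(x, v)` is a trajectory of the magnetic vector field `V` of `(g, Y)` on `[0, T]`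
    (T : ℝ) (hT : 0 < T)
    (x v : ℝ → (Fin n → ℝ))
    (hxU : ∀ s ∈ Set.Icc (0 : ℝ) T, x s ∈ U)
    (hxode : ∀ s ∈ Set.Icc (0 : ℝ) T, HasDerivWithinAt x (v s) (Set.Icc (0 : ℝ) T) s)
    (hvode : ∀ s ∈ Set.Icc (0 : ℝ) T,
      HasDerivWithinAt v (fun i =>
        -(∑ j, ∑ k, christoffel (fun w => (c w) ^ 2 • g0 w) (x s) i j k
            * v s j * v s k)
          + ∑ j, Y (x s) i j * v s j) (Set.Icc (0 : ℝ) T) s)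
    -- unit initial speed and agreement of the endpoints
    (hunit : v 0 ⬝ᵥ ((c (x 0)) ^ 2 • g0 (x 0)) *ᵥ v 0 = 1)
    (hend : (x T, v T) = X T (x 0, v 0)) :
    ∀ l : Fin n,
      (∫ s in (0 : ℝ)..T, ∑ i,
        (fderiv ℝ (fun σ : (Fin n → ℝ) × (Fin n → ℝ) => (X (T - s) σ).2 l) (x s, v s))
            ((0 : Fin n → ℝ), Pi.single i 1) *
          (2 * v s i * (∑ j, fderiv ℝ (fun w => Real.log (ct w / c w)) (x s)
                (Pi.single j 1) * v s j)
            - (c (x s) ^ 2)⁻¹ * ∑ j, (g0 (x s))⁻¹ i j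
                * fderiv ℝ (fun w => Real.log (ct w / c w)) (x s) (Pi.single j 1)
            + ∑ j, (Y (x s) i j - Yt (x s) i j) * v s j)) = 0 := by
  intro l
  have hdiff : ∀ {f : (Fin n → ℝ) → ℝ}, ContDiffOn ℝ 1 f U → ∀ z ∈ U, DifferentiableAt ℝ f z :=
    fun hf z hz => (hf.differentiableOn one_ne_zero).differentiableAt (hU.mem_nhds hz)
  have hdet0 : ∀ z ∈ U, IsUnit (g0 z).det := fun z hz => (hg0pos z hz).det_pos.ne'.isUnit
  have hconf : ∀ {f : (Fin n → ℝ) → ℝ}, ContDiffOn ℝ 1 f U → (∀ z ∈ U, 0 < f z) →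
      (∀ i j, ContDiffOn ℝ 1 (fun z => (f z ^ 2 • g0 z) i j) U)
        ∧ ∀ z ∈ U, IsUnit (f z ^ 2 • g0 z).det := fun hf hfpos =>
    ⟨fun i j => (hf.pow 2).mul (hg0 i j), fun z hz => by
      rw [det_smul]
      exact ((pow_ne_zero 2 (hfpos z hz).ne').isUnit.pow _).mul (hdet0 z hz)⟩
  obtain ⟨hg, hgdet⟩ := hconf hc hcpos
  obtain ⟨hgt, hgtdet⟩ := hconf hct hctpos
  have henergy : ∀ s ∈ Set.Icc 0 T, v s ⬝ᵥ g0 (x s) *ᵥ v s = (c (x s) ^ 2)⁻¹ := by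
    intro s hs
    have h := magnetic_energy_eq (G := fun w => c w ^ 2 • g0 w)
      (fun s hs i j => hdiff (hg i j) _ (hxU s hs)) (fun s hs => (hg0sym _ (hxU s hs)).smul _)
      (fun s hs => hgdet _ (hxU s hs)) (fun s hs => hYanti _ (hxU s hs)) hxode hvode s hs
    rw [hunit, smul_mulVec, dotProduct_smul, smul_eq_mul] at h
    exact eq_inv_of_mul_eq_one_right h
  set L : (Fin n → ℝ) × (Fin n → ℝ) →L[ℝ] ℝ :=
    (ContinuousLinearMap.proj l).comp (ContinuousLinearMap.snd ℝ _ _)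
  refine (intervalIntegral.integral_congr fun s hs => ?_).trans
    (integral_fderiv_flow_magneticAccel_sub hU hg hgdet hgt hgtdet hY hYt hXC1 hX0 hXode hXgroup
      hT.le hxU hxode hvode hend L)
  rw [Set.uIcc_of_le hT.le] at hs
  have hz := hxU s hs
  simp only [← magneticAccel_conformal_sub (Y := Y) (Y' := Yt) (hdiff hc _ hz) (hcpos _ hz).ne'
    (hdiff hct _ hz) (hctpos _ hz).ne' (fun i j => hdiff (hg0 i j) _ hz) (hdet0 _ hz)
    (henergy s hs)]
  exact (ContinuousLinearMap.pi_apply_eq_sum_single_mul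
    ((fderiv ℝ (fun σ => L (X (T - s) σ)) (x s, v s)).comp (ContinuousLinearMap.inr ℝ _ _)) _).symm

/-- the pseudo-linearization identity reducing magnetic lens rigidity
for conformal metrics `g = c²g₀`, `g̃ = c̃²g₀` with Lorentz force matrices `Y`, `Ỹ` to
a weighted ray transform.  Here `X = (Z̃, Ξ̃)` is a C¹ flow of the magnetic vector
field `Ṽ` of `(g̃, Ỹ)`, `(x, v)` is a trajectory of the magnetic vector field `V` of
`(g, Y)` on `[0, T]` with unit initial `g`-speed, and the endpoints agree; then the
weighted integral of the combination of `dh` (`h = log(c̃/c)`) and `Y − Ỹ` along the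
trajectory vanishes. -/
theorem stmt_13 (n : ℕ) (U : Set (Fin n → ℝ)) (hU : IsOpen U)
    (g0 : (Fin n → ℝ) → Matrix (Fin n) (Fin n) ℝ)
    (hg0 : ∀ i j, ContDiffOn ℝ 1 (fun z => g0 z i j) U)
    (hg0sym : ∀ z ∈ U, (g0 z).IsSymm)
    (hg0pos : ∀ z ∈ U, (g0 z).PosDef)
    (c ct : (Fin n → ℝ) → ℝ)
    (hc : ContDiffOn ℝ 1 c U) (hct : ContDiffOn ℝ 1 ct U)
    (hcpos : ∀ z ∈ U, 0 < c z) (hctpos : ∀ z ∈ U, 0 < ct z)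
    (Y Yt : (Fin n → ℝ) → Matrix (Fin n) (Fin n) ℝ)
    (hY : ∀ i j, ContinuousOn (fun z => Y z i j) U)
    (hYt : ∀ i j, ContinuousOn (fun z => Yt z i j) U)
    (hYanti : ∀ z ∈ U, (((c z) ^ 2 • g0 z) * Y z)ᵀ = -(((c z) ^ 2 • g0 z) * Y z))
    (hYtanti : ∀ z ∈ U, (((ct z) ^ 2 • g0 z) * Yt z)ᵀ = -(((ct z) ^ 2 • g0 z) * Yt z))
    -- `X` is a C¹ flow of the magnetic vector field `Ṽ` of `(g̃, Ỹ)`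
    (X : ℝ → (Fin n → ℝ) × (Fin n → ℝ) → (Fin n → ℝ) × (Fin n → ℝ))
    (hXC1 : ContDiff ℝ 1 (fun p : ℝ × ((Fin n → ℝ) × (Fin n → ℝ)) => X p.1 p.2))
    (hX0 : ∀ σ, X 0 σ = σ)
    (hXode : ∀ (t : ℝ) (σ : (Fin n → ℝ) × (Fin n → ℝ)),
      HasDerivAt (fun τ => X τ σ)
        ((X t σ).2, fun i =>
          -(∑ j, ∑ k, christoffel (fun w => (ct w) ^ 2 • g0 w) (X t σ).1 i j k
              * (X t σ).2 j * (X t σ).2 k)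
            + ∑ j, Yt (X t σ).1 i j * (X t σ).2 j) t)
    (hXgroup : ∀ s t : ℝ, ∀ σ, X (t + s) σ = X t (X s σ))
    -- `(x, v)` is a trajectory of the magnetic vector field `V` of `(g, Y)` on `[0, T]`
    (T : ℝ) (hT : 0 < T)
    (x v : ℝ → (Fin n → ℝ))
    (hxU : ∀ s ∈ Set.Icc (0 : ℝ) T, x s ∈ U)
    (hxode : ∀ s ∈ Set.Icc (0 : ℝ) T, HasDerivWithinAt x (v s) (Set.Icc (0 : ℝ) T) s)
    (hvode : ∀ s ∈ Set.Icc (0 : ℝ) T,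
      HasDerivWithinAt v (fun i =>
        -(∑ j, ∑ k, christoffel (fun w => (c w) ^ 2 • g0 w) (x s) i j k
            * v s j * v s k)
          + ∑ j, Y (x s) i j * v s j) (Set.Icc (0 : ℝ) T) s)
    -- unit initial speed and agreement of the endpoints
    (hunit : v 0 ⬝ᵥ ((c (x 0)) ^ 2 • g0 (x 0)) *ᵥ v 0 = 1)
    (hend : (x T, v T) = X T (x 0, v 0)) :
    ∀ l : Fin n,
      (∫ s in (0 : ℝ)..T, ∑ i,
        (fderiv ℝ (fun σ : (Fin n → ℝ) × (Fin n → ℝ) => (X (T - s) σ).2 l) (x s, v s))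
            ((0 : Fin n → ℝ), Pi.single i 1) *
          (2 * v s i * (∑ j, fderiv ℝ (fun w => Real.log (ct w / c w)) (x s)
                (Pi.single j 1) * v s j)
            - (c (x s) ^ 2)⁻¹ * ∑ j, (g0 (x s))⁻¹ i j
                * fderiv ℝ (fun w => Real.log (ct w / c w)) (x s) (Pi.single j 1)
            + ∑ j, (Y (x s) i j - Yt (x s) i j) * v s j)) = 0 :=
  stmt_13_general n U hU g0 hg0 hg0sym hg0pos c ct hc hct hcpos hctpos Y Yt hY hYt hYanti X hXC1 hX0
    hXode hXgroup T hT x v hxU hxode hvode hunit hend
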